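/- arXiv:1812.10776 — 2 statements merged into one kernel-verified Lean document; each statement's English description precedes it below -/
import Mathlib

section
/- Let (ξ_n)_{n≥1} be i.i.d. centered real random variables with E[exp(θ|ξ_1|)] < ∞ for some θ > 0, and let S_n = ξ_1 + ... + ξ_n. Then for every ε > 0 and δ ∈ (0, 1/2) there exists a random variable K ≥ 0 with E[K²] < ∞ such that almost surely |S_n| ≤ K + ε n^{1/2+δ} for all n ≥ 1. -/
open MeasureTheory ProbabilityTheory Filter Real Finset
open scoped ENNReal

/-!
Take `K² = ∑ₙ Sₙ² 𝟙{|Sₙ| > ε n^(1/2+δ)}`: then `|Sₙ| ≤ K + ε n^(1/2+δ)` for every `n`, and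
`𝔼[K²] < ∞` as soon as the series of expectations converges. By Cauchy–Schwarz and the triangle
inequality in `L⁴`, its `n`-th term is at most `n² ‖ξ₁‖₄² ℙ(|Sₙ| > ε n^(1/2+δ))^(1/2)`. The
exponential moment gives `mgf ξ₁ t ≤ exp (C t²)` for `|t| ≤ θ/2`, so a Chernoff bound at
`t ≍ n^(δ-1/2)` (admissible because `δ ≤ 1/2`) bounds that probability by `2 exp (-c n^(2δ))`,
and `n² exp (-c n^(2δ) / 2)` is summable.
-/

lemma Real.summable_pow_mul_exp_neg_mul_rpow (k : ℕ) {c β : ℝ} (hc : 0 < c) (hβ : 0 < β) :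
    Summable fun n : ℕ => (n : ℝ) ^ k * exp (-c * (n : ℝ) ^ β) := by
  have hlo := (isLittleO_rpow_exp_pos_mul_atTop ((k + 2) / β) hc).comp_tendsto
    ((tendsto_rpow_atTop hβ).comp tendsto_natCast_atTop_atTop)
  refine summable_of_isBigO_nat (Real.summable_nat_pow_inv.2 one_lt_two) ?_
  refine Asymptotics.IsBigO.of_bound 1 ?_
  filter_upwards [hlo.bound one_pos, eventually_ge_atTop 1] with n hn hn1
  have hn0 : (0 : ℝ) < n := by exact_mod_cast hn1
  simp only [Function.comp_apply, norm_eq_abs, abs_exp, one_mul] at hn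
  rw [abs_of_nonneg (by positivity), ← rpow_mul hn0.le, mul_div_cancel₀ _ hβ.ne',
    show ((k : ℝ) + 2) = ((k + 2 : ℕ) : ℝ) by push_cast; ring, rpow_natCast] at hn
  rw [norm_of_nonneg (by positivity), norm_of_nonneg (by positivity), one_mul, neg_mul,
    exp_neg, ← div_eq_mul_inv, div_le_iff₀ (exp_pos _), ← div_eq_inv_mul,
    le_div_iff₀ (by positivity)]
  calc (n : ℝ) ^ k * (n : ℝ) ^ 2 = (n : ℝ) ^ (k + 2) := by ring
    _ ≤ exp (c * (n : ℝ) ^ β) := hn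

lemma Real.exp_le_one_add_add_sq_mul_exp_abs (y : ℝ) : exp y ≤ 1 + y + y ^ 2 * exp |y| := by
  have h1 : (1 - y) * exp y ≤ 1 := by
    have := mul_le_mul_of_nonneg_right (add_one_le_exp (-y)) (exp_pos y).le
    rwa [← exp_add, neg_add_cancel, exp_zero, neg_add_eq_sub] at this
  rcases le_or_gt 0 y with hy | hy
  · rw [abs_of_nonneg hy]
    nlinarith [exp_pos y, mul_le_mul_of_nonneg_left h1 hy]
  · have : exp y ≤ 1 + y + y ^ 2 := by nlinarith [exp_pos y]
    nlinarith [one_le_exp (abs_nonneg y), sq_nonneg y]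

section

variable {Ω : Type*} [MeasurableSpace Ω] {μ : Measure Ω}

section ExponentialMoment

variable {X : Ω → ℝ} {θ : ℝ}

lemma integrable_exp_mul_of_integrable_exp_mul_abs (hX : AEMeasurable X μ)
    (h : Integrable (fun ω => exp (θ * |X ω|)) μ) {t : ℝ} (ht : |t| ≤ θ) :
    Integrable (fun ω => exp (t * X ω)) μ := by
  refine h.mono (by fun_prop) (ae_of_all _ fun ω => ?_)
  simp only [norm_eq_abs, abs_exp, exp_le_exp]
  calc t * X ω ≤ |t| * |X ω| := by rw [← abs_mul]; exact le_abs_self _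
    _ ≤ θ * |X ω| := by gcongr

lemma zero_mem_interior_integrableExpSet_of_integrable_exp_mul_abs (hX : AEMeasurable X μ)
    (hθ : 0 < θ) (h : Integrable (fun ω => exp (θ * |X ω|)) μ) :
    0 ∈ interior (integrableExpSet X μ) :=
  mem_interior.2 ⟨Set.Ioo (-θ) θ,
    fun _ ht => integrable_exp_mul_of_integrable_exp_mul_abs hX h (abs_lt.2 ht).le,
    isOpen_Ioo, by simpa using hθ⟩

/-- The constant is `𝔼[X² exp (θ/2 |X|)] + 1`, through `exp y ≤ 1 + y + y² exp |y|`. -/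
lemma exists_mgf_le_exp_mul_sq_of_integrable_exp_mul_abs [IsProbabilityMeasure μ]
    (hX : AEMeasurable X μ) (hθ : 0 < θ) (h : Integrable (fun ω => exp (θ * |X ω|)) μ)
    (hcenter : μ[X] = 0) :
    ∃ C > 0, ∀ t, |t| ≤ θ / 2 → mgf X μ t ≤ exp (C * t ^ 2) := by
  have hint : ∀ t, |t| ≤ θ → Integrable (fun ω => exp (t * X ω)) μ :=
    fun t ht => integrable_exp_mul_of_integrable_exp_mul_abs hX h ht
  have hsq : Integrable (fun ω => X ω ^ 2 * exp (θ / 2 * |X ω|)) μ := by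
    simpa using integrable_pow_abs_mul_exp_add_of_integrable_exp_mul (v := 0) (t := θ)
      (by simpa using hint θ (abs_of_pos hθ).le)
      (by simpa using hint (-θ) (by simp [abs_of_pos hθ]))
      (by positivity) (by rw [abs_of_pos hθ]; linarith) 2
  have hX1 : Integrable X μ := integrable_of_mem_interior_integrableExpSet
    (zero_mem_interior_integrableExpSet_of_integrable_exp_mul_abs hX hθ h)
  set C := μ[fun ω => X ω ^ 2 * exp (θ / 2 * |X ω|)]
  have hC : 0 ≤ C := integral_nonneg fun ω => by positivity
  refine ⟨C + 1, by positivity, fun t ht => ?_⟩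
  have hpt : ∀ ω, exp (t * X ω) ≤ 1 + t * X ω + t ^ 2 * (X ω ^ 2 * exp (θ / 2 * |X ω|)) := by
    intro ω
    calc exp (t * X ω) ≤ 1 + t * X ω + (t * X ω) ^ 2 * exp |t * X ω| :=
          exp_le_one_add_add_sq_mul_exp_abs _
      _ ≤ 1 + t * X ω + (t * X ω) ^ 2 * exp (θ / 2 * |X ω|) := by
          rw [abs_mul]; gcongr
      _ = _ := by ring
  have hlin : Integrable (fun ω => 1 + t * X ω) μ := (integrable_const 1).add (hX1.const_mul t)
  calc mgf X μ t ≤ ∫ ω, 1 + t * X ω + t ^ 2 * (X ω ^ 2 * exp (θ / 2 * |X ω|)) ∂μ :=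
        integral_mono (hint t (by linarith)) (hlin.add (hsq.const_mul _)) hpt
    _ = 1 + C * t ^ 2 := by
        rw [integral_add hlin (hsq.const_mul _), integral_add (integrable_const 1)
          (hX1.const_mul t), integral_const_mul, integral_const_mul, hcenter]
        simp [C, mul_comm]
    _ ≤ exp ((C + 1) * t ^ 2) := by
        nlinarith [add_one_le_exp ((C + 1) * t ^ 2), sq_nonneg t]

end ExponentialMoment

lemma measureReal_abs_ge_le_of_mgf_le [IsFiniteMeasure μ] {Y : Ω → ℝ} {t b : ℝ} (ε : ℝ)
    (ht : 0 ≤ t) (h_int_pos : Integrable (fun ω => exp (t * Y ω)) μ)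
    (h_int_neg : Integrable (fun ω => exp (-t * Y ω)) μ)
    (h_pos : mgf Y μ t ≤ exp b) (h_neg : mgf Y μ (-t) ≤ exp b) :
    μ.real {ω | ε ≤ |Y ω|} ≤ 2 * exp (b - t * ε) := by
  have hsub : {ω | ε ≤ |Y ω|} ⊆ {ω | ε ≤ Y ω} ∪ {ω | Y ω ≤ -ε} := fun ω hω => by
    simp only [Set.mem_ofPred_eq, Set.mem_union] at hω ⊢
    rcases le_abs'.1 hω with h | h
    · exact Or.inr (by linarith)
    · exact Or.inl h
  have hexp : exp (-t * ε) * exp b = exp (b - t * ε) := by rw [← exp_add]; ring_nf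
  calc μ.real {ω | ε ≤ |Y ω|} ≤ μ.real {ω | ε ≤ Y ω} + μ.real {ω | Y ω ≤ -ε} :=
        (measureReal_mono hsub).trans (measureReal_union_le _ _)
    _ ≤ exp (-t * ε) * mgf Y μ t + exp (-t * ε) * mgf Y μ (-t) :=
        add_le_add (measure_ge_le_exp_mul_mgf ε ht h_int_pos)
          ((measure_le_le_exp_mul_mgf (-ε) (neg_nonpos.2 ht) h_int_neg).trans_eq (by ring_nf))
    _ ≤ exp (-t * ε) * exp b + exp (-t * ε) * exp b := by gcongr
    _ = 2 * exp (b - t * ε) := by rw [hexp]; ring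

lemma setLIntegral_enorm_sq_le_eLpNorm_four_sq_mul_sqrt [IsFiniteMeasure μ] {Y : Ω → ℝ}
    (hY : AEStronglyMeasurable Y μ) (A : Set Ω) :
    ∫⁻ ω in A, ‖Y ω‖ₑ ^ 2 ∂μ ≤ eLpNorm Y 4 μ ^ 2 * ENNReal.ofReal √(μ.real A) := by
  have hL2 : ∫⁻ ω in A, ‖Y ω‖ₑ ^ 2 ∂μ = eLpNorm Y 2 (μ.restrict A) ^ 2 := by
    have := eLpNorm_nnreal_pow_eq_lintegral (f := Y) (μ := μ.restrict A) (p := 2) two_ne_zero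
    simp only [NNReal.coe_ofNat, ENNReal.coe_ofNat, ENNReal.rpow_two] at this
    exact this.symm
  have hsqrt : ENNReal.ofReal √(μ.real A) = (μ A ^ (1 / 4 : ℝ)) ^ 2 := by
    rw [← ENNReal.rpow_natCast, ← ENNReal.rpow_mul, Real.sqrt_eq_rpow,
      ← ENNReal.ofReal_rpow_of_nonneg measureReal_nonneg (by norm_num), ofReal_measureReal]
    norm_num
  rw [hL2, hsqrt, ← mul_pow]
  gcongr
  calc eLpNorm Y 2 (μ.restrict A)
      ≤ eLpNorm Y 4 (μ.restrict A) *
          μ.restrict A Set.univ ^ (1 / (2 : ℝ≥0∞).toReal - 1 / (4 : ℝ≥0∞).toReal) :=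
        eLpNorm_le_eLpNorm_mul_rpow_measure_univ (by norm_num) hY.restrict
    _ ≤ eLpNorm Y 4 μ * μ A ^ (1 / 4 : ℝ) := by
        rw [Measure.restrict_apply_univ]
        norm_num
        gcongr
        exact Measure.restrict_le_self

/-- The witness is `K = √(∑ₙ Yₙ² 𝟙{bₙ < |Yₙ|})`. -/
lemma exists_sq_integrable_abs_le_add {Y : ℕ → Ω → ℝ} (hY : ∀ n, Measurable (Y n))
    {b : ℕ → ℝ} (hb : ∀ n, 0 ≤ b n)
    (h : ∑' n, ∫⁻ ω in {ω | b n < |Y n ω|}, ‖Y n ω‖ₑ ^ 2 ∂μ ≠ ∞) :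
    ∃ K : Ω → ℝ, (∀ ω, 0 ≤ K ω) ∧ Integrable (fun ω => K ω ^ 2) μ ∧
      ∀ᵐ ω ∂μ, ∀ n, |Y n ω| ≤ K ω + b n := by
  set A : ℕ → Set Ω := fun n => {ω | b n < |Y n ω|}
  have hA : ∀ n, MeasurableSet (A n) := fun n => measurableSet_lt measurable_const (hY n).abs
  set G : Ω → ℝ≥0∞ := fun ω => ∑' n, (A n).indicator (fun ω => ‖Y n ω‖ₑ ^ 2) ω
  have hGm : Measurable G := Measurable.tsum fun n =>
    ((hY n).enorm.pow_const 2).indicator (hA n)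
  have hG : ∫⁻ ω, G ω ∂μ ≠ ∞ := by
    rwa [lintegral_tsum fun n => (((hY n).enorm.pow_const 2).indicator (hA n)).aemeasurable,
      tsum_congr fun n => lintegral_indicator (hA n) _]
  refine ⟨fun ω => √(G ω).toReal, fun ω => sqrt_nonneg _, ?_, ?_⟩
  · simpa only [sq_sqrt ENNReal.toReal_nonneg] using
      integrable_toReal_of_lintegral_ne_top hGm.aemeasurable hG
  · filter_upwards [ae_lt_top hGm hG] with ω hω n
    by_cases hn : ω ∈ A n
    · have hle : ‖Y n ω‖ₑ ^ 2 ≤ G ω :=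
        (Set.indicator_of_mem hn (fun ω => ‖Y n ω‖ₑ ^ 2)).symm.trans_le
          (ENNReal.le_tsum (f := fun n => (A n).indicator (fun ω => ‖Y n ω‖ₑ ^ 2) ω) n)
      have : |Y n ω| ≤ √(G ω).toReal := by
        rw [le_sqrt (abs_nonneg _) ENNReal.toReal_nonneg]
        simpa using ENNReal.toReal_mono hω.ne hle
      linarith [hb n]
    · have : |Y n ω| ≤ b n := not_lt.1 hn
      linarith [sqrt_nonneg (G ω).toReal]

lemma eLpNorm_sum_range_le_of_identDistrib {X : ℕ → Ω → ℝ}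
    (hX : ∀ i, AEStronglyMeasurable (X i) μ) (hident : ∀ i, IdentDistrib (X i) (X 0) μ μ)
    {p : ℝ≥0∞} (hp : 1 ≤ p) (n : ℕ) :
    eLpNorm (∑ i ∈ range n, X i) p μ ≤ n * eLpNorm (X 0) p μ := by
  calc eLpNorm (∑ i ∈ range n, X i) p μ ≤ ∑ i ∈ range n, eLpNorm (X i) p μ :=
        eLpNorm_sum_le (fun i _ => hX i) hp
    _ = n * eLpNorm (X 0) p μ := by simp [fun i => (hident i).eLpNorm_eq]

section IID

variable [IsProbabilityMeasure μ] {X : ℕ → Ω → ℝ} {θ : ℝ}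

lemma exists_measureReal_abs_sum_range_ge_le (hX : ∀ i, Measurable (X i))
    (hindep : iIndepFun X μ) (hident : ∀ i, IdentDistrib (X i) (X 0) μ μ) (hθ : 0 < θ)
    (hexp : Integrable (fun ω => exp (θ * |X 0 ω|)) μ) (hcenter : μ[X 0] = 0)
    {ε δ : ℝ} (hε : 0 < ε) (hδ : δ ≤ 1 / 2) :
    ∃ c > 0, ∀ n : ℕ, 1 ≤ n →
      μ.real {ω | ε * (n : ℝ) ^ (1 / 2 + δ) ≤ |(∑ i ∈ range n, X i) ω|}
        ≤ 2 * exp (-c * (n : ℝ) ^ (2 * δ)) := by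
  obtain ⟨C, hC, hmgf⟩ :=
    exists_mgf_le_exp_mul_sq_of_integrable_exp_mul_abs (hX 0).aemeasurable hθ hexp hcenter
  set κ := min (θ / 2) (ε / (2 * C))
  have hκ : 0 < κ := lt_min (by positivity) (by positivity)
  have hCκ : C * κ ≤ ε / 2 := by
    calc C * κ ≤ C * (ε / (2 * C)) := mul_le_mul_of_nonneg_left (min_le_right _ _) hC.le
      _ = ε / 2 := by field_simp
  refine ⟨κ * ε / 2, by positivity, fun n hn => ?_⟩
  have hn0 : (0 : ℝ) < n := by exact_mod_cast hn
  -- the Chernoff parameter `s = κ n^(δ - 1/2)` balances `n C s²` against `s ε n^(1/2 + δ)`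
  set s := κ * (n : ℝ) ^ (δ - 1 / 2)
  have hs0 : 0 ≤ s := by positivity
  have hsθ : s ≤ θ / 2 := calc
    s ≤ κ * 1 := mul_le_mul_of_nonneg_left
      (rpow_le_one_of_one_le_of_nonpos (by exact_mod_cast hn) (by linarith)) hκ.le
    _ ≤ θ / 2 := by rw [mul_one]; exact min_le_left _ _
  have hmgfS : ∀ t, |t| ≤ θ / 2 → mgf (∑ i ∈ range n, X i) μ t ≤ exp (n * C * t ^ 2) := by
    intro t ht
    rw [mgf_sum_of_identDistrib hX hindep (fun i _ j _ => (hident i).trans (hident j).symm)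
      (mem_range.2 hn) t, card_range, mul_assoc, exp_nat_mul]
    exact pow_le_pow_left₀ mgf_nonneg (hmgf t ht) n
  have hint : ∀ t, |t| ≤ θ → Integrable (fun ω => exp (t * (∑ i ∈ range n, X i) ω)) μ := by
    intro t ht
    refine hindep.integrable_exp_mul_sum hX fun i _ =>
      integrable_exp_mul_of_integrable_exp_mul_abs (hX i).aemeasurable ?_ ht
    exact ((hident i).symm.comp (by fun_prop : Measurable fun x => exp (θ * |x|))).integrable_snd
      hexp
  have hns : (n : ℝ) * s ^ 2 = κ ^ 2 * (n : ℝ) ^ (2 * δ) := by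
    calc (n : ℝ) * s ^ 2
        = κ ^ 2 * ((n : ℝ) ^ (1 : ℝ) * (n : ℝ) ^ (δ - 1 / 2) * (n : ℝ) ^ (δ - 1 / 2)) := by
          rw [rpow_one]; ring
      _ = κ ^ 2 * (n : ℝ) ^ (2 * δ) := by
          rw [← rpow_add hn0, ← rpow_add hn0]; ring_nf
  have hst : s * (ε * (n : ℝ) ^ (1 / 2 + δ)) = κ * ε * (n : ℝ) ^ (2 * δ) := by
    calc s * (ε * (n : ℝ) ^ (1 / 2 + δ))
        = κ * ε * ((n : ℝ) ^ (δ - 1 / 2) * (n : ℝ) ^ (1 / 2 + δ)) := by ring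
      _ = κ * ε * (n : ℝ) ^ (2 * δ) := by rw [← rpow_add hn0]; ring_nf
  have hs : |s| ≤ θ / 2 := by rwa [abs_of_nonneg hs0]
  refine (measureReal_abs_ge_le_of_mgf_le _ hs0 (hint s (by linarith))
    (hint (-s) (by rw [abs_neg]; linarith)) (hmgfS s hs)
    (by simpa using hmgfS (-s) (by rwa [abs_neg]))).trans ?_
  gcongr
  have hκN : 0 ≤ κ * (n : ℝ) ^ (2 * δ) := by positivity
  linear_combination C * hns - hst + mul_le_mul_of_nonneg_right hCκ hκN

lemma exists_setLIntegral_enorm_sq_sum_range_le (hX : ∀ i, Measurable (X i))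
    (hindep : iIndepFun X μ) (hident : ∀ i, IdentDistrib (X i) (X 0) μ μ) (hθ : 0 < θ)
    (hexp : Integrable (fun ω => exp (θ * |X 0 ω|)) μ) (hcenter : μ[X 0] = 0)
    {ε δ : ℝ} (hε : 0 < ε) (hδ : δ ≤ 1 / 2) :
    ∃ a ≥ 0, ∃ c > 0, ∀ n : ℕ,
      ∫⁻ ω in {ω | ε * (n : ℝ) ^ (1 / 2 + δ) < |(∑ i ∈ range n, X i) ω|},
          ‖(∑ i ∈ range n, X i) ω‖ₑ ^ 2 ∂μ
        ≤ ENNReal.ofReal (a * ((n : ℝ) ^ 2 * exp (-c * (n : ℝ) ^ (2 * δ)))) := by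
  obtain ⟨c, hc, htail⟩ :=
    exists_measureReal_abs_sum_range_ge_le hX hindep hident hθ hexp hcenter hε hδ
  have hM : eLpNorm (X 0) 4 μ ≠ ∞ := (memLp_of_mem_interior_integrableExpSet
    (zero_mem_interior_integrableExpSet_of_integrable_exp_mul_abs (hX 0).aemeasurable hθ hexp)
    4).eLpNorm_ne_top
  refine ⟨(eLpNorm (X 0) 4 μ).toReal ^ 2 * √2, by positivity, c / 2, by positivity, fun n => ?_⟩
  refine (setLIntegral_enorm_sq_le_eLpNorm_four_sq_mul_sqrt (by fun_prop) _).trans ?_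
  have hmom := eLpNorm_sum_range_le_of_identDistrib (fun i => (hX i).aestronglyMeasurable)
    hident (by norm_num : (1 : ℝ≥0∞) ≤ 4) n
  rcases Nat.eq_zero_or_pos n with rfl | hn
  · simp
  have hsqrt : √(μ.real {ω | ε * (n : ℝ) ^ (1 / 2 + δ) < |(∑ i ∈ range n, X i) ω|})
      ≤ √2 * exp (-(c / 2) * (n : ℝ) ^ (2 * δ)) := by
    have hsub : {ω | ε * (n : ℝ) ^ (1 / 2 + δ) < |(∑ i ∈ range n, X i) ω|}
        ⊆ {ω | ε * (n : ℝ) ^ (1 / 2 + δ) ≤ |(∑ i ∈ range n, X i) ω|} :=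
      Set.ofPred_subset_ofPred.2 fun _ => le_of_lt
    calc _ ≤ √(2 * exp (-c * (n : ℝ) ^ (2 * δ))) :=
          sqrt_le_sqrt ((measureReal_mono hsub).trans (htail n hn))
      _ = √2 * exp (-(c / 2) * (n : ℝ) ^ (2 * δ)) := by
          rw [sqrt_mul zero_le_two, ← exp_half]; ring_nf
  calc eLpNorm (∑ i ∈ range n, X i) 4 μ ^ 2 * ENNReal.ofReal √(μ.real _)
      ≤ (n * eLpNorm (X 0) 4 μ) ^ 2 *
          ENNReal.ofReal (√2 * exp (-(c / 2) * (n : ℝ) ^ (2 * δ))) := by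
        gcongr
    _ = _ := by
        rw [← ENNReal.ofReal_toReal hM, ← ENNReal.ofReal_natCast,
          ← ENNReal.ofReal_mul (by positivity), ← ENNReal.ofReal_pow (by positivity),
          ← ENNReal.ofReal_mul (by positivity), ENNReal.toReal_ofReal ENNReal.toReal_nonneg]
        ring_nf

end IID

end

theorem stmt_1_general {Ω : Type*} [MeasurableSpace Ω] (μ : Measure Ω) [IsProbabilityMeasure μ]
    (ξ : ℕ → Ω → ℝ) (hmeas : ∀ n, Measurable (ξ n))
    (hindep : iIndepFun ξ μ)
    (hident : ∀ n, μ.map (ξ n) = μ.map (ξ 1))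
    (hcentered : ∀ n, ∫ ω, ξ n ω ∂μ = 0)
    (θ : ℝ) (hθ : 0 < θ)
    (hexp : Integrable (fun ω => Real.exp (θ * |ξ 1 ω|)) μ)
    (S : ℕ → Ω → ℝ)
    (hS : ∀ n ω, S n ω = ∑ i ∈ Finset.range n, ξ (i + 1) ω)
    (ε δ : ℝ) (hε : 0 < ε) (hδ : 0 < δ) (hδ' : δ < 1 / 2) :
    ∃ K : Ω → ℝ, (∀ ω, 0 ≤ K ω) ∧ Integrable (fun ω => (K ω) ^ 2) μ ∧
      ∀ᵐ ω ∂μ, ∀ n : ℕ, 1 ≤ n →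
        |S n ω| ≤ K ω + ε * (n : ℝ) ^ ((1 : ℝ) / 2 + δ) := by
  set X : ℕ → Ω → ℝ := fun i => ξ (i + 1)
  have hX : ∀ i, Measurable (X i) := fun i => hmeas (i + 1)
  have hXident : ∀ i, IdentDistrib (X i) (X 0) μ μ := fun i =>
    ⟨(hX i).aemeasurable, (hX 0).aemeasurable, by simp only [X, hident]⟩
  have hSX : S = fun n => ∑ i ∈ range n, X i := by
    ext n ω
    simp [hS, X]
  subst hSX
  obtain ⟨a, ha, c, hc, hbound⟩ := exists_setLIntegral_enorm_sq_sum_range_le hX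
    (hindep.precomp (add_left_injective 1)) hXident hθ hexp (hcentered 1) hε hδ'.le
  refine (exists_sq_integrable_abs_le_add (μ := μ) (Y := fun n => ∑ i ∈ range n, X i)
    (fun n => by fun_prop) (b := fun n : ℕ => ε * (n : ℝ) ^ ((1 : ℝ) / 2 + δ))
    (fun n => by positivity) ?_).imp
    fun K ⟨hK0, hK, hle⟩ => ⟨hK0, hK, hle.mono fun ω h n _ => h n⟩
  refine ne_top_of_le_ne_top ?_ (ENNReal.tsum_le_tsum hbound)
  exact ENNReal.ofReal_tsum_of_nonneg (fun n => by positivity)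
    ((summable_pow_mul_exp_neg_mul_rpow 2 hc (by positivity : 0 < 2 * δ)).mul_left a) ▸
      ENNReal.ofReal_ne_top

/-- For an i.i.d. sequence of centered random variables whose absolute value
has a finite exponential moment of some order `θ > 0`, with partial sums `S n`, for every
`ε > 0` and `δ ∈ (0, 1/2)` there is a nonnegative random variable `K` with `E[K²] < ∞`
such that almost surely `|S n| ≤ K + ε · n^(1/2 + δ)` for all `n ≥ 1`. -/
theorem stmt_1 {Ω : Type*} [MeasurableSpace Ω] (μ : Measure Ω) [IsProbabilityMeasure μ]
    (ξ : ℕ → Ω → ℝ) (hmeas : ∀ n, Measurable (ξ n))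
    (hindep : iIndepFun ξ μ)
    (hident : ∀ n, μ.map (ξ n) = μ.map (ξ 1))
    (hint : ∀ n, Integrable (ξ n) μ)
    (hcentered : ∀ n, ∫ ω, ξ n ω ∂μ = 0)
    (θ : ℝ) (hθ : 0 < θ)
    (hexp : Integrable (fun ω => Real.exp (θ * |ξ 1 ω|)) μ)
    (S : ℕ → Ω → ℝ)
    (hS : ∀ n ω, S n ω = ∑ i ∈ Finset.range n, ξ (i + 1) ω)
    (ε δ : ℝ) (hε : 0 < ε) (hδ : 0 < δ) (hδ' : δ < 1 / 2) :
    ∃ K : Ω → ℝ, (∀ ω, 0 ≤ K ω) ∧ Integrable (fun ω => (K ω) ^ 2) μ ∧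
      ∀ᵐ ω ∂μ, ∀ n : ℕ, 1 ≤ n →
        |S n ω| ≤ K ω + ε * (n : ℝ) ^ ((1 : ℝ) / 2 + δ) :=
  stmt_1_general μ ξ hmeas hindep hident hcentered θ hθ hexp S hS ε δ hε hδ hδ'
end

section
/- Let (S_n)_{n≥0} be a martingale with S_0 = 0 and increments ξ_n = S_n − S_{n−1} satisfying |ξ_n| ≤ C almost surely for a constant C > 0. Then for every ε > 0 and δ ∈ (0, 1/4) there exists a random variable K ≥ 0 with E[K²] < ∞ such that almost surely |S_n| ≤ K + ε n^{1/2+δ} for all n ≥ 1. -/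
/-!
Hoeffding's convexity bound `exp (t ξ) ≤ cosh (t C) + (sinh (t C) / C) ξ` for an increment
`|ξ| ≤ C`, together with `E[f ξ] = 0` for `ℱ n`-measurable `f`, gives
`E[exp (t S n)] ≤ cosh (t C) ^ n`, so `S n` is sub-Gaussian with variance proxy `n C²`
(Azuma–Hoeffding). With `a n = ε n^(1/2 + δ)` this gives `P(|S n| ≥ a n) ≤ 2 exp (-c n^(2δ))`,
`c = ε² / (2 C²)`. The excess `X n = (|S n| - a n)⁺` is at most `C n` and vanishes off that event,
so the `L²` norms of the `X n` are summable; hence `∑ X n` converges in `L²` and almost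
everywhere, and its absolute value is the required `K`.
-/

open MeasureTheory ProbabilityTheory Filter Real Topology
open scoped ENNReal NNReal

lemma exp_mul_le_cosh_add_mul_of_abs_le {C x : ℝ} (hC : 0 < C) (hx : |x| ≤ C) (t : ℝ) :
    exp (t * x) ≤ cosh (t * C) + sinh (t * C) / C * x := by
  obtain ⟨hx₁, hx₂⟩ := abs_le.mp hx
  have hconv := convexOn_exp.2 (Set.mem_univ (t * C)) (Set.mem_univ (-(t * C)))
    (div_nonneg (by linarith) (by positivity) : 0 ≤ (C + x) / (2 * C))
    (div_nonneg (by linarith) (by positivity) : 0 ≤ (C - x) / (2 * C))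
    (by field_simp; ring)
  have hcomb : (C + x) / (2 * C) * (t * C) + (C - x) / (2 * C) * -(t * C) = t * x := by
    field_simp; ring
  simp only [smul_eq_mul, hcomb] at hconv
  refine hconv.trans_eq ?_
  rw [cosh_eq, sinh_eq, exp_neg]
  field_simp
  ring

lemma ProbabilityTheory.HasSubgaussianMGF.measureReal_abs_ge_le {Ω : Type*} {m : MeasurableSpace Ω}
    {μ : Measure Ω} {X : Ω → ℝ} {c : ℝ≥0} (h : HasSubgaussianMGF X c μ) {ε : ℝ} (hε : 0 ≤ ε) :
    μ.real {ω | ε ≤ |X ω|} ≤ 2 * exp (-ε ^ 2 / (2 * c)) := by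
  have hsplit : {ω | ε ≤ |X ω|} = {ω | ε ≤ X ω} ∪ {ω | ε ≤ (-X) ω} := by
    ext ω; simp [le_abs]
  calc μ.real {ω | ε ≤ |X ω|} ≤ μ.real {ω | ε ≤ X ω} + μ.real {ω | ε ≤ (-X) ω} :=
        hsplit ▸ measureReal_union_le _ _
    _ ≤ exp (-ε ^ 2 / (2 * c)) + exp (-ε ^ 2 / (2 * c)) :=
        add_le_add (h.measure_ge_le hε) (h.neg.measure_ge_le hε)
    _ = 2 * exp (-ε ^ 2 / (2 * c)) := by ring

lemma summable_natCast_mul_exp_neg_mul_rpow {c r : ℝ} (hc : 0 < c) (hr : 0 < r) :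
    Summable fun n : ℕ => n * exp (-c * (n : ℝ) ^ r) := by
  have hlim : Tendsto (fun n : ℕ => (n : ℝ) ^ (3 : ℝ) * exp (-c * (n : ℝ) ^ r)) atTop (𝓝 0) := by
    have := (tendsto_rpow_mul_exp_neg_mul_atTop_nhds_zero (3 / r) c hc).comp
      ((tendsto_rpow_atTop hr).comp tendsto_natCast_atTop_atTop)
    refine this.congr fun n => ?_
    simp only [Function.comp_apply, ← rpow_mul (Nat.cast_nonneg n)]
    field_simp
  refine summable_of_isBigO_nat (summable_one_div_nat_pow.mpr one_lt_two)
    (Asymptotics.isBigO_iff.mpr ⟨1, ?_⟩)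
  filter_upwards [hlim.eventually (eventually_le_nhds one_pos), eventually_ge_atTop 1]
    with n hn hn₁
  have hn₀ : (0 : ℝ) < n := by exact_mod_cast hn₁
  rw [norm_of_nonneg (by positivity), norm_of_nonneg (by positivity), one_mul,
    le_div_iff₀ (by positivity)]
  calc (n : ℝ) * exp (-c * (n : ℝ) ^ r) * (n : ℝ) ^ 2
      = (n : ℝ) ^ (3 : ℝ) * exp (-c * (n : ℝ) ^ r) := by
        rw [show (3 : ℝ) = (3 : ℕ) by norm_num, rpow_natCast]; ring
    _ ≤ 1 := hn

lemma summable_mul_sqrt_two_mul_exp_neg_sq_div {C ε δ : ℝ} (hC : C ≠ 0) (hε : ε ≠ 0)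
    (hδ : 0 < δ) :
    Summable fun n : ℕ => C * n *
      (sqrt 2 * exp (-(ε * (n : ℝ) ^ ((1 : ℝ) / 2 + δ)) ^ 2 / (4 * (n * C ^ 2)))) := by
  have hexponent (n : ℕ) : -(ε * (n : ℝ) ^ ((1 : ℝ) / 2 + δ)) ^ 2 / (4 * (n * C ^ 2)) =
      -(ε ^ 2 / (4 * C ^ 2)) * (n : ℝ) ^ (2 * δ) := by
    rcases n.eq_zero_or_pos with rfl | hn
    · simp [zero_rpow (by positivity : 2 * δ ≠ 0)]
    · have hn' : (0 : ℝ) < n := by exact_mod_cast hn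
      have hsq : ((n : ℝ) ^ ((1 : ℝ) / 2 + δ)) ^ 2 = n * (n : ℝ) ^ (2 * δ) := by
        rw [← rpow_natCast, ← rpow_mul hn'.le, ← rpow_one_add' hn'.le (by positivity)]
        norm_num
        ring_nf
      rw [mul_pow, hsq]
      field_simp
  simp only [hexponent]
  refine ((summable_natCast_mul_exp_neg_mul_rpow (c := ε ^ 2 / (4 * C ^ 2)) (r := 2 * δ)
    (by positivity) (by positivity)).mul_left (C * sqrt 2)).congr fun n => ?_
  ring

section Lp

variable {Ω : Type*} {m : MeasurableSpace Ω} {μ : Measure Ω}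

lemma eLpNorm_max_abs_sub_le {X : Ω → ℝ} {a M : ℝ} (ha : 0 ≤ a) (hXM : ∀ᵐ ω ∂μ, |X ω| ≤ M)
    (p : ℝ≥0∞) :
    eLpNorm (fun ω => max (|X ω| - a) 0) p μ ≤ ‖M‖ₑ * μ {ω | a ≤ |X ω|} ^ (1 / p.toReal) := by
  refine (eLpNorm_mono_ae ?_).trans (eLpNorm_indicator_const_le M p)
  filter_upwards [hXM] with ω hω
  rw [norm_of_nonneg (le_max_right _ _)]
  by_cases hmem : a ≤ |X ω|
  · rw [Set.indicator_of_mem (by exact hmem), norm_eq_abs, abs_of_nonneg ((abs_nonneg _).trans hω)]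
    exact max_le (by linarith) ((abs_nonneg _).trans hω)
  · rw [Set.indicator_of_notMem (by exact hmem), max_eq_right (by linarith), norm_zero]

lemma exists_memLp_ge_of_tsum_eLpNorm_ne_top {p : ℝ≥0∞} [Fact (1 ≤ p)] {X : ℕ → Ω → ℝ}
    (hX : ∀ n, AEStronglyMeasurable (X n) μ) (hX₀ : ∀ n ω, 0 ≤ X n ω)
    (hsum : ∑' n, eLpNorm (X n) p μ ≠ ∞) :
    ∃ K : Ω → ℝ, (∀ ω, 0 ≤ K ω) ∧ MemLp K p μ ∧ ∀ᵐ ω ∂μ, ∀ n, X n ω ≤ K ω := by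
  have hXp n : MemLp (X n) p μ := ⟨hX n, (ENNReal.le_tsum n).trans_lt hsum.lt_top⟩
  set F := ∑' n, (hXp n).toLp (X n)
  have hF : ∀ᵐ ω ∂μ, HasSum (fun n => X n ω) (F ω) := by
    have hsum' : ∑' n, ‖(hXp n).toLp (X n)‖ₑ ≠ ∞ := by simpa only [Lp.enorm_toLp] using hsum
    filter_upwards [Lp.hasSum_coeFn_tsum hsum', ae_all_iff.2 fun n => (hXp n).coeFn_toLp]
      with ω hω hωX
    simpa only [hωX] using hω
  refine ⟨fun ω => |F ω|, fun ω => abs_nonneg _, (Lp.memLp F).abs, ?_⟩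
  filter_upwards [hF] with ω hω n
  exact (le_hasSum hω n fun k _ => hX₀ k ω).trans (le_abs_self _)

end Lp

section Martingale

variable {Ω : Type*} {m : MeasurableSpace Ω} {μ : Measure Ω} {ℱ : Filtration ℕ m}
  {S : ℕ → Ω → ℝ} {C : ℝ}

lemma ae_abs_le_mul_of_abs_sub_le (hS0 : ∀ᵐ ω ∂μ, S 0 ω = 0)
    (hbdd : ∀ n, ∀ᵐ ω ∂μ, |S (n + 1) ω - S n ω| ≤ C) (n : ℕ) :
    ∀ᵐ ω ∂μ, |S n ω| ≤ C * n := by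
  induction n with
  | zero => filter_upwards [hS0] with ω hω; simp [hω]
  | succ k ih =>
    filter_upwards [ih, hbdd k] with ω hk hstep
    have := abs_sub_abs_le_abs_sub (S (k + 1) ω) (S k ω)
    push_cast
    linarith

lemma MeasureTheory.Martingale.integral_mul_sub_eq_zero [IsFiniteMeasure μ]
    (hS : Martingale S ℱ μ) {n : ℕ} {f : Ω → ℝ} (hf : StronglyMeasurable[ℱ n] f)
    (hfS : Integrable (fun ω => f ω * (S (n + 1) ω - S n ω)) μ) :
    ∫ ω, f ω * (S (n + 1) ω - S n ω) ∂μ = 0 := by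
  have hcond : μ[S (n + 1) - S n | ℱ n] =ᵐ[μ] 0 := by
    filter_upwards [condExp_sub (hS.integrable (n + 1)) (hS.integrable n) (ℱ n),
      hS.condExp_ae_eq n.le_succ] with ω hsub hnext
    rw [hsub, Pi.sub_apply, hnext,
      condExp_of_stronglyMeasurable (ℱ.le n) (hS.stronglyAdapted n) (hS.integrable n), sub_self]
    rfl
  calc ∫ ω, f ω * (S (n + 1) ω - S n ω) ∂μ = ∫ ω, (μ[f * (S (n + 1) - S n) | ℱ n]) ω ∂μ :=
        (integral_condExp (ℱ.le n)).symm
    _ = 0 := by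
        refine (integral_congr_ae ?_).trans (integral_zero Ω ℝ)
        filter_upwards [condExp_mul_of_stronglyMeasurable_left (g := S (n + 1) - S n) hf hfS
          ((hS.integrable (n + 1)).sub (hS.integrable n)), hcond] with ω hpull hzero
        rw [hpull, Pi.mul_apply, hzero, Pi.zero_apply, mul_zero]

variable [IsProbabilityMeasure μ]

lemma MeasureTheory.Martingale.integrable_exp_mul (hS : Martingale S ℱ μ) (hS0 : ∀ᵐ ω ∂μ, S 0 ω = 0)
    (hbdd : ∀ n, ∀ᵐ ω ∂μ, |S (n + 1) ω - S n ω| ≤ C) (t : ℝ) (n : ℕ) :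
    Integrable (fun ω => exp (t * S n ω)) μ :=
  integrable_exp_mul_of_mem_Icc (hS.stronglyMeasurable n |>.mono (ℱ.le n)).aemeasurable
    ((ae_abs_le_mul_of_abs_sub_le hS0 hbdd n).mono fun _ => abs_le.mp)

lemma MeasureTheory.Martingale.mgf_le_cosh_pow (hS : Martingale S ℱ μ) (hS0 : ∀ᵐ ω ∂μ, S 0 ω = 0)
    (hC : 0 < C) (hbdd : ∀ n, ∀ᵐ ω ∂μ, |S (n + 1) ω - S n ω| ≤ C) (t : ℝ) (n : ℕ) :
    mgf (S n) μ t ≤ cosh (t * C) ^ n := by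
  induction n with
  | zero =>
    rw [pow_zero, mgf, integral_congr_ae (g := fun _ => (1 : ℝ)) ?_, integral_const]
    · simp
    · filter_upwards [hS0] with ω hω; simp [hω]
  | succ k ih =>
    set f : Ω → ℝ := fun ω => exp (t * S k ω)
    set ξ : Ω → ℝ := fun ω => S (k + 1) ω - S k ω
    have hf : StronglyMeasurable[ℱ k] f :=
      continuous_exp.comp_stronglyMeasurable ((hS.stronglyAdapted k).const_mul t)
    have hfξ : Integrable (fun ω => f ω * ξ ω) μ :=
      (hS.integrable_exp_mul hS0 hbdd t k).mul_bdd
        ((hS.integrable (k + 1)).sub (hS.integrable k)).aestronglyMeasurable (hbdd k)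
    have hstep : ∀ᵐ ω ∂μ, exp (t * S (k + 1) ω) ≤
        cosh (t * C) * f ω + sinh (t * C) / C * (f ω * ξ ω) := by
      filter_upwards [hbdd k] with ω hω
      have hsplit : exp (t * S (k + 1) ω) = f ω * exp (t * ξ ω) := by
        simp only [f, ξ, ← exp_add, mul_sub, add_sub_cancel]
      rw [hsplit]
      nlinarith [mul_le_mul_of_nonneg_left (exp_mul_le_cosh_add_mul_of_abs_le hC hω t)
        (exp_pos (t * S k ω)).le]
    calc mgf (S (k + 1)) μ t
        ≤ ∫ ω, (cosh (t * C) * f ω + sinh (t * C) / C * (f ω * ξ ω)) ∂μ :=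
          integral_mono_ae (hS.integrable_exp_mul hS0 hbdd t (k + 1))
            (((hS.integrable_exp_mul hS0 hbdd t k).const_mul _).add (hfξ.const_mul _)) hstep
      _ = cosh (t * C) * mgf (S k) μ t := by
          rw [integral_add ((hS.integrable_exp_mul hS0 hbdd t k).const_mul _)
            (hfξ.const_mul _), integral_const_mul, integral_const_mul,
            hS.integral_mul_sub_eq_zero hf hfξ, mul_zero, add_zero]
          rfl
      _ ≤ cosh (t * C) ^ (k + 1) := by
          rw [pow_succ']
          exact mul_le_mul_of_nonneg_left ih (cosh_pos _).le

lemma MeasureTheory.Martingale.hasSubgaussianMGF (hS : Martingale S ℱ μ) (hS0 : ∀ᵐ ω ∂μ, S 0 ω = 0)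
    (hC : 0 < C) (hbdd : ∀ n, ∀ᵐ ω ∂μ, |S (n + 1) ω - S n ω| ≤ C) (n : ℕ) :
    HasSubgaussianMGF (S n) (n * C ^ 2).toNNReal μ where
  integrable_exp_mul t := hS.integrable_exp_mul hS0 hbdd t n
  mgf_le t := by
    calc mgf (S n) μ t ≤ cosh (t * C) ^ n := hS.mgf_le_cosh_pow hS0 hC hbdd t n
      _ ≤ exp ((t * C) ^ 2 / 2) ^ n := by gcongr; exact cosh_le_exp_half_sq _
      _ = exp ((n * C ^ 2).toNNReal * t ^ 2 / 2) := by
          rw [← exp_nat_mul, Real.coe_toNNReal _ (by positivity)]; ring_nf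

lemma MeasureTheory.Martingale.eLpNorm_max_abs_sub_le (hS : Martingale S ℱ μ)
    (hS0 : ∀ᵐ ω ∂μ, S 0 ω = 0) (hC : 0 < C) (hbdd : ∀ n, ∀ᵐ ω ∂μ, |S (n + 1) ω - S n ω| ≤ C)
    (n : ℕ) {a : ℝ} (ha : 0 ≤ a) :
    eLpNorm (fun ω => max (|S n ω| - a) 0) 2 μ ≤
      ENNReal.ofReal (C * n * (sqrt 2 * exp (-a ^ 2 / (4 * (n * C ^ 2))))) := by
  have htail : μ {ω | a ≤ |S n ω|} ≤ ENNReal.ofReal (2 * exp (-a ^ 2 / (2 * (n * C ^ 2)))) := by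
    rw [← ofReal_measureReal]
    refine ENNReal.ofReal_le_ofReal ?_
    simpa [Real.coe_toNNReal _ (by positivity : 0 ≤ (n : ℝ) * C ^ 2)] using
      (hS.hasSubgaussianMGF hS0 hC hbdd n).measureReal_abs_ge_le ha
  refine (_root_.eLpNorm_max_abs_sub_le ha (ae_abs_le_mul_of_abs_sub_le hS0 hbdd n) 2).trans ?_
  calc ‖C * n‖ₑ * μ {ω | a ≤ |S n ω|} ^ (1 / (2 : ℝ≥0∞).toReal)
      ≤ ENNReal.ofReal (C * n) *
          ENNReal.ofReal (2 * exp (-a ^ 2 / (2 * (n * C ^ 2)))) ^ (1 / 2 : ℝ) := by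
        rw [Real.enorm_of_nonneg (by positivity), ENNReal.toReal_ofNat]
        gcongr
    _ = ENNReal.ofReal (C * n * (sqrt 2 * exp (-a ^ 2 / (4 * (n * C ^ 2))))) := by
        rw [ENNReal.ofReal_rpow_of_nonneg (by positivity) (by norm_num), ← ENNReal.ofReal_mul
          (by positivity), ← sqrt_eq_rpow, sqrt_mul zero_le_two, ← exp_half]
        ring_nf

end Martingale

theorem stmt_2_general {Ω : Type*} {m : MeasurableSpace Ω} (μ : Measure Ω) [IsProbabilityMeasure μ]
    (ℱ : Filtration ℕ m) (S : ℕ → Ω → ℝ)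
    (hmart : Martingale S ℱ μ)
    (hS0 : ∀ᵐ ω ∂μ, S 0 ω = 0)
    (C : ℝ) (hC : 0 < C)
    (hbdd : ∀ n : ℕ, ∀ᵐ ω ∂μ, |S (n + 1) ω - S n ω| ≤ C)
    (ε δ : ℝ) (hε : 0 < ε) (hδ : 0 < δ) :
    ∃ K : Ω → ℝ, (∀ ω, 0 ≤ K ω) ∧ Integrable (fun ω => (K ω) ^ 2) μ ∧
      ∀ᵐ ω ∂μ, ∀ n : ℕ, 1 ≤ n →
        |S n ω| ≤ K ω + ε * (n : ℝ) ^ ((1 : ℝ) / 2 + δ) := by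
  set a : ℕ → ℝ := fun n => ε * (n : ℝ) ^ ((1 : ℝ) / 2 + δ)
  set X : ℕ → Ω → ℝ := fun n ω => max (|S n ω| - a n) 0
  have hX : ∀ n, AEStronglyMeasurable (X n) μ := fun n =>
    ((((hmart.stronglyMeasurable n).mono (ℱ.le n)).measurable.abs.sub_const _).max
      measurable_const).aestronglyMeasurable
  have hsum : ∑' n, eLpNorm (X n) 2 μ ≠ ∞ := by
    have hb := summable_mul_sqrt_two_mul_exp_neg_sq_div hC.ne' hε.ne' hδ
    refine ((ENNReal.tsum_le_tsum fun n =>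
      hmart.eLpNorm_max_abs_sub_le hS0 hC hbdd n (by positivity)).trans_lt ?_).ne
    rw [← ENNReal.ofReal_tsum_of_nonneg (fun n => by positivity) hb]
    exact ENNReal.ofReal_lt_top
  obtain ⟨K, hK₀, hK, hXK⟩ :=
    exists_memLp_ge_of_tsum_eLpNorm_ne_top hX (fun n ω => le_max_right _ _) hsum
  refine ⟨K, hK₀, hK.integrable_sq, ?_⟩
  filter_upwards [hXK] with ω hω n _
  linarith [le_max_left (|S n ω| - a n) 0, hω n]

/-- For a martingale `S` with `S 0 = 0` and increments bounded almost surely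
by a constant `C > 0`, for every `ε > 0` and `δ ∈ (0, 1/4)` there exists a nonnegative
random variable `K` with `E[K²] < ∞` such that almost surely
`|S n| ≤ K + ε · n^(1/2 + δ)` for all `n ≥ 1`. -/
theorem stmt_2 {Ω : Type*} {m : MeasurableSpace Ω} (μ : Measure Ω) [IsProbabilityMeasure μ]
    (ℱ : Filtration ℕ m) (S : ℕ → Ω → ℝ)
    (hmart : Martingale S ℱ μ)
    (hS0 : ∀ᵐ ω ∂μ, S 0 ω = 0)
    (C : ℝ) (hC : 0 < C)
    (hbdd : ∀ n : ℕ, ∀ᵐ ω ∂μ, |S (n + 1) ω - S n ω| ≤ C)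
    (ε δ : ℝ) (hε : 0 < ε) (hδ : 0 < δ) (hδ' : δ < 1 / 4) :
    ∃ K : Ω → ℝ, (∀ ω, 0 ≤ K ω) ∧ Integrable (fun ω => (K ω) ^ 2) μ ∧
      ∀ᵐ ω ∂μ, ∀ n : ℕ, 1 ≤ n →
        |S n ω| ≤ K ω + ε * (n : ℝ) ^ ((1 : ℝ) / 2 + δ) :=
  stmt_2_general μ ℱ S hmart hS0 C hC hbdd ε δ hε hδ
end
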